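/- arXiv:0911.3814 — 7 statements merged into one kernel-verified Lean document; each statement's English description precedes it below -/
import Mathlib

section
/- Let P and Q be probability distributions on finite sets S and R respectively, and let their product distribution on S×R have collision probability P_C(SR) = P_C(S)·P_C(R). If P_C(S) ≤ 2^{-H} + 1/|S| for some real H, then the statistical distance of the product distribution P_{SR} from U_S × P_R satisfies D(P_{SR}, U_S × P_R) ≤ (√|S|/2) · 2^{-H/2}, where U_S is the uniform distribution on S. -/
open Finset

/-- If the collision probability of `P` on `S` is at most `2^{-H} + 1/|S|`, then the
statistical distance of the product distribution `P × Q` on `S × R` from `U_S × Q`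
is at most `(√|S|/2) · 2^{-H/2}`. -/
theorem product_dist_from_uniform_le
    (S R : Type*) [Fintype S] [Nonempty S] [Fintype R] [Nonempty R]
    (P : S → ℝ) (Q : R → ℝ)
    (hP0 : ∀ s, 0 ≤ P s) (hP1 : ∑ s, P s = 1)
    (hQ0 : ∀ r, 0 ≤ Q r) (hQ1 : ∑ r, Q r = 1)
    (H : ℝ) (hcoll : ∑ s, (P s) ^ 2 ≤ (2 : ℝ) ^ (-H) + 1 / (Fintype.card S : ℝ)) :
    (1 / 2) * ∑ s, ∑ r, |P s * Q r - (1 / (Fintype.card S : ℝ)) * Q r|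
      ≤ (Real.sqrt (Fintype.card S) / 2) * (2 : ℝ) ^ (-H / 2) := by
  set n : ℝ := (Fintype.card S : ℝ) with hn
  have hnpos : (0:ℝ) < n := by rw [hn]; exact_mod_cast (Fintype.card_pos : 0 < Fintype.card S)
  have key : ∀ s, ∑ r, |P s * Q r - (1/n) * Q r| = |P s - 1/n| := by
    intro s
    have h1 : ∀ r, |P s * Q r - (1/n) * Q r| = |P s - 1/n| * Q r := by
      intro r
      rw [← sub_mul, abs_mul, abs_of_nonneg (hQ0 r)]
    simp_rw [h1, ← Finset.mul_sum, hQ1, mul_one]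
  simp_rw [key]
  have expand : ∑ s, (P s - 1/n)^2 ≤ (2:ℝ)^(-H) := by
    have h2 : ∀ s : S, (P s - 1/n)^2 = (P s)^2 - (2/n) * P s + 1/n^2 := by
      intro s; field_simp; ring
    have h3 : ∑ s, (P s - 1/n)^2 = (∑ s, (P s)^2) - 1/n := by
      simp_rw [h2, Finset.sum_add_distrib, Finset.sum_sub_distrib, ← Finset.mul_sum, hP1,
        Finset.sum_const, Finset.card_univ, nsmul_eq_mul, ← hn]
      field_simp
      ring
    rw [h3]; linarith
  have cauchy : (∑ s, |P s - 1/n|)^2 ≤ n * ∑ s, (P s - 1/n)^2 := by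
    have := Finset.sum_mul_sq_le_sq_mul_sq Finset.univ (fun _ : S => (1:ℝ))
      (fun s => |P s - 1/n|)
    simp only [one_mul, one_pow, Finset.sum_const, Finset.card_univ, nsmul_eq_mul, mul_one,
      sq_abs] at this
    exact this
  have habs : (0:ℝ) ≤ ∑ s, |P s - 1/n| := Finset.sum_nonneg fun s _ => abs_nonneg _
  have hbound : ∑ s, |P s - 1/n| ≤ Real.sqrt (n * (2:ℝ)^(-H)) := by
    rw [Real.le_sqrt habs]
    swap
    · positivity
    calc (∑ s, |P s - 1/n|)^2 ≤ n * ∑ s, (P s - 1/n)^2 := cauchy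
      _ ≤ n * (2:ℝ)^(-H) := by
          exact mul_le_mul_of_nonneg_left expand (le_of_lt hnpos)
  have hsqrt : Real.sqrt (n * (2:ℝ)^(-H)) = Real.sqrt n * (2:ℝ)^(-H/2) := by
    rw [Real.sqrt_mul (le_of_lt hnpos)]
    congr 1
    rw [show (-H/2) = (-H)*(1/2) by ring, Real.rpow_mul (by norm_num : (0:ℝ) ≤ 2),
      ← Real.sqrt_eq_rpow]
  rw [hsqrt] at hbound
  linarith
end

section
/- Let F be a universal₂ family of hash functions from a finite set X to a finite set S, and let X be a random variable on X with Rényi entropy of order 2 equal to H₂(X) (i.e., ∑_x P_X(x)² = 2^{-H₂(X)}). If f is chosen uniformly at random from F, independently of X, then the collision probability of S = f(X) satisfies P_C(S) ≤ 2^{-H₂(X)} + 1/|S|. -/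
/-!
For a fixed hash function `f`, the collision probability of `f(X)` is
`∑_{x,x'} p x p x' [f x = f x']`. Averaging the distribution of `f(X)` over `f` can only lower the
collision probability (Jensen), so `P_C(S)` is at most the average over `f` of this double sum. In
the averaged sum, the diagonal terms contribute `∑ p x ² = 2^{-H₂}`, and off the diagonal
universality bounds the collision frequency by `1/|S|`, leaving at most `(∑ p x)² / |S| = 1/|S|`.
-/

open Finset

theorem sum_sq_fiber_sum_eq_sum_sum_ite {X S : Type*} [Fintype X] [Fintype S] [DecidableEq S]
    (f : X → S) (p : X → ℝ) :
    ∑ s : S, (∑ x ∈ univ.filter (fun x => f x = s), p x) ^ 2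
      = ∑ x, ∑ x', if f x = f x' then p x * p x' else 0 := by
  have fiber_sq (s : S) : (∑ x ∈ univ.filter (fun x => f x = s), p x) ^ 2
      = ∑ x ∈ univ.filter (fun x => f x = s),
          p x * ∑ x' ∈ univ.filter (fun x' => f x = f x'), p x' := by
    rw [sq, sum_mul]
    refine sum_congr rfl fun x hx => ?_
    obtain rfl := (mem_filter.mp hx).2
    congr 2
    exact filter_congr fun _ _ => eq_comm
  simp only [fiber_sq, sum_fiberwise univ f, mul_sum, ← sum_filter]

theorem collision_frac_le_of_universal {X S : Type*} [DecidableEq X] [DecidableEq S]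
    {F : Finset (X → S)} {c : ℝ}
    (huniv : ∀ x₁ x₂ : X, x₁ ≠ x₂ → ((F.filter (fun f => f x₁ = f x₂)).card : ℝ) / F.card ≤ c)
    (hc : 0 ≤ c) (x x' : X) :
    ((F.filter (fun f => f x = f x')).card : ℝ) / F.card ≤ (if x = x' then 1 else 0) + c := by
  split_ifs with h
  · have frac_le_one : ((F.filter (fun f => f x = f x')).card : ℝ) / F.card ≤ 1 :=
      div_le_one_of_le₀ (by exact_mod_cast card_filter_le _ _) (Nat.cast_nonneg _)
    linarith
  · simpa using huniv x x' h

theorem sum_sq_avg_fiber_sum_le {X S : Type*} [Fintype X] [Fintype S] [DecidableEq S]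
    (F : Finset (X → S)) (p : X → ℝ) :
    ∑ s : S, ((1 / (F.card : ℝ)) * ∑ f ∈ F, ∑ x ∈ univ.filter (fun x => f x = s), p x) ^ 2
      ≤ ∑ x, ∑ x', p x * p x' * (((F.filter (fun f => f x = f x')).card : ℝ) / F.card) := by
  calc _ = ∑ s : S, ((∑ f ∈ F, ∑ x ∈ univ.filter (fun x => f x = s), p x) / F.card) ^ 2 := by
        simp only [one_div_mul_eq_div]
    _ ≤ ∑ s : S, (∑ f ∈ F, (∑ x ∈ univ.filter (fun x => f x = s), p x) ^ 2) / F.card :=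
        sum_le_sum fun _ _ => sum_div_card_sq_le_sum_sq_div_card
    _ = (∑ f ∈ F, ∑ x, ∑ x', if f x = f x' then p x * p x' else 0) / F.card := by
        rw [← sum_div, sum_comm]
        simp only [sum_sq_fiber_sum_eq_sum_sum_ite]
    _ = _ := by
        rw [sum_comm, sum_div]
        refine sum_congr rfl fun x _ => ?_
        rw [sum_comm, sum_div]
        refine sum_congr rfl fun x' _ => ?_
        rw [← sum_filter, sum_const, nsmul_eq_mul, mul_comm, mul_div_assoc]

theorem universal_hash_collision_bound_general
    (X S : Type*) [Fintype X] [Fintype S] [DecidableEq S]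
    (F : Finset (X → S))
    (huniv : ∀ x₁ x₂ : X, x₁ ≠ x₂ →
      ((F.filter (fun f => f x₁ = f x₂)).card : ℝ) / F.card ≤ 1 / (Fintype.card S : ℝ))
    (p : X → ℝ) (hp0 : ∀ x, 0 ≤ p x) (hp1 : ∑ x, p x = 1)
    (H₂ : ℝ) (hH₂ : ∑ x, (p x) ^ 2 = (2 : ℝ) ^ (-H₂)) :
    ∑ s : S, ((1 / (F.card : ℝ)) * ∑ f ∈ F, ∑ x ∈ univ.filter (fun x => f x = s), p x) ^ 2
      ≤ (2 : ℝ) ^ (-H₂) + 1 / (Fintype.card S : ℝ) := by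
  classical
  calc _ ≤ ∑ x, ∑ x', p x * p x' * (((F.filter (fun f => f x = f x')).card : ℝ) / F.card) :=
        sum_sq_avg_fiber_sum_le F p
    _ ≤ ∑ x, ∑ x', p x * p x' * ((if x = x' then 1 else 0) + 1 / (Fintype.card S : ℝ)) := by
        gcongr with x _ x' _
        · exact mul_nonneg (hp0 x) (hp0 x')
        · exact collision_frac_le_of_universal huniv (by positivity) x x'
    _ = ∑ x, p x ^ 2 + 1 / (Fintype.card S : ℝ) * (∑ x, p x) ^ 2 := by
        have diagonal (x : X) : ∑ x', p x * p x' * (if x = x' then 1 else 0) = p x ^ 2 := by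
          simp [sq]
        rw [sq (∑ x, p x), sum_mul_sum, mul_comm, sum_mul]
        simp only [mul_add, sum_add_distrib, diagonal, sum_mul]
    _ = (2 : ℝ) ^ (-H₂) + 1 / (Fintype.card S : ℝ) := by rw [hH₂, hp1, one_pow, mul_one]

/-- If `F` is a universal₂ family of hash functions from `X` to `S`, `X` is distributed
according to `p` with Rényi-2 entropy `H₂` (i.e. `∑ p x ² = 2^{-H₂}`), and `f` is drawn
uniformly from `F` independently of `X`, then the collision probability of `S = f(X)`
is at most `2^{-H₂} + 1/|S|`. -/
theorem universal_hash_collision_bound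
    (X S : Type*) [Fintype X] [Fintype S] [Nonempty S] [DecidableEq S]
    (F : Finset (X → S)) (hF : F.Nonempty)
    (huniv : ∀ x₁ x₂ : X, x₁ ≠ x₂ →
      ((F.filter (fun f => f x₁ = f x₂)).card : ℝ) / F.card ≤ 1 / (Fintype.card S : ℝ))
    (p : X → ℝ) (hp0 : ∀ x, 0 ≤ p x) (hp1 : ∑ x, p x = 1)
    (H₂ : ℝ) (hH₂ : ∑ x, (p x) ^ 2 = (2 : ℝ) ^ (-H₂)) :
    ∑ s : S, ((1 / (F.card : ℝ)) * ∑ f ∈ F, ∑ x ∈ univ.filter (fun x => f x = s), p x) ^ 2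
      ≤ (2 : ℝ) ^ (-H₂) + 1 / (Fintype.card S : ℝ) :=
  universal_hash_collision_bound_general X S F huniv p hp0 hp1 H₂ hH₂
end

section
/- (Klein's inequality) For density matrices ρ and σ on a finite-dimensional Hilbert space with supp(ρ) ⊆ supp(σ), the quantum relative entropy H(ρ‖σ) = tr(ρ log ρ) − tr(ρ log σ) is non-negative, with equality if and only if ρ = σ. -/
/-!
Diagonalize `ρ = ∑ pᵢ |aᵢ⟩⟨aᵢ|` and `σ = ∑ qⱼ |bⱼ⟩⟨bⱼ|`. The overlaps `Pᵢⱼ = |⟪aᵢ, bⱼ⟫|²` form a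
doubly stochastic matrix, and `H(ρ‖σ) = ∑ᵢⱼ Pᵢⱼ pᵢ (log pᵢ - log qⱼ)`. Termwise
`pᵢ (log pᵢ - log qⱼ) ≥ pᵢ - qⱼ` by `log x ≤ x - 1`, strictly unless `pᵢ = qⱼ`, while
`∑ᵢⱼ Pᵢⱼ (pᵢ - qⱼ) = tr ρ - tr σ = 0`. The support condition gives `pᵢ = 0` whenever `qⱼ = 0` and
`Pᵢⱼ ≠ 0`, so the convention `log 0 = 0` does no harm. In the equality case `pᵢ = qⱼ` whenever
`⟪aᵢ, bⱼ⟫ ≠ 0`, i.e. the change of basis intertwines the two diagonal matrices, whence `ρ = σ`.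
-/

open Matrix
open scoped ComplexOrder

variable {n : Type*}

/-- The matrix logarithm of a Hermitian matrix, defined via its spectral decomposition,
with the convention `log 0 = 0` (so the logarithm is taken on the support). -/
noncomputable def hermitianLog [Fintype n] [DecidableEq n]
    {A : Matrix n n ℂ} (hA : A.IsHermitian) : Matrix n n ℂ :=
  (hA.eigenvectorUnitary : Matrix n n ℂ) *
    Matrix.diagonal (fun i => (Real.log (hA.eigenvalues i) : ℂ)) *
    (star (hA.eigenvectorUnitary : Matrix n n ℂ))

namespace Real

section

variable {c p q : ℝ}

theorem sub_lt_mul_log_sub_log (hp : 0 ≤ p) (hq : 0 ≤ q) (hpq : q = 0 → p = 0)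
    (hne : p ≠ q) : p - q < p * (log p - log q) := by
  rcases hp.eq_or_lt with rfl | hp
  · simpa using lt_of_le_of_ne hq hne
  have hq : 0 < q := lt_of_le_of_ne hq fun h => hp.ne' (hpq h.symm)
  have hlog : log (q / p) < q / p - 1 :=
    log_lt_sub_one_of_pos (div_pos hq hp) (by rwa [ne_eq, div_eq_one_iff_eq hp.ne', eq_comm])
  calc p - q = -(p * (q / p - 1)) := by field_simp; ring
    _ < -(p * log (q / p)) := neg_lt_neg (mul_lt_mul_of_pos_left hlog hp)
    _ = p * (log p - log q) := by rw [log_div hq.ne' hp.ne']; ring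

theorem mul_sub_le_mul_mul_log_sub_log (hc : 0 ≤ c) (hp : 0 ≤ p) (hq : 0 ≤ q)
    (hpq : c ≠ 0 → q = 0 → p = 0) : c * (p - q) ≤ c * p * (log p - log q) := by
  rcases hc.eq_or_lt with rfl | hc
  · simp
  rcases eq_or_ne p q with rfl | hne
  · simp
  rw [mul_assoc]
  exact (mul_lt_mul_of_pos_left (sub_lt_mul_log_sub_log hp hq (hpq hc.ne') hne) hc).le

theorem mul_sub_eq_mul_mul_log_sub_log_iff (hc : 0 ≤ c) (hp : 0 ≤ p) (hq : 0 ≤ q)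
    (hpq : c ≠ 0 → q = 0 → p = 0) :
    c * (p - q) = c * p * (log p - log q) ↔ (c ≠ 0 → p = q) := by
  refine ⟨fun h hc0 => by_contra fun hne => ?_, fun h => ?_⟩
  · have := mul_lt_mul_of_pos_left (sub_lt_mul_log_sub_log hp hq (hpq hc0) hne)
      (lt_of_le_of_ne hc (Ne.symm hc0))
    rw [← mul_assoc] at this
    exact this.ne h
  · rcases eq_or_ne c 0 with rfl | hc0
    · simp
    · simp [h hc0]

end

section

variable {ι : Type*} {s : Finset ι} {c p q : ι → ℝ}

theorem sum_mul_mul_log_sub_log_nonneg (hc : ∀ x ∈ s, 0 ≤ c x) (hp : ∀ x ∈ s, 0 ≤ p x)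
    (hq : ∀ x ∈ s, 0 ≤ q x) (hpq : ∀ x ∈ s, c x ≠ 0 → q x = 0 → p x = 0)
    (hsum : ∑ x ∈ s, c x * p x = ∑ x ∈ s, c x * q x) :
    0 ≤ ∑ x ∈ s, c x * p x * (log (p x) - log (q x)) :=
  calc 0 = ∑ x ∈ s, c x * (p x - q x) := by
        simp only [mul_sub, Finset.sum_sub_distrib, hsum, sub_self]
    _ ≤ _ := Finset.sum_le_sum fun x hx =>
      mul_sub_le_mul_mul_log_sub_log (hc x hx) (hp x hx) (hq x hx) (hpq x hx)

theorem sum_mul_mul_log_sub_log_eq_zero_iff (hc : ∀ x ∈ s, 0 ≤ c x) (hp : ∀ x ∈ s, 0 ≤ p x)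
    (hq : ∀ x ∈ s, 0 ≤ q x) (hpq : ∀ x ∈ s, c x ≠ 0 → q x = 0 → p x = 0)
    (hsum : ∑ x ∈ s, c x * p x = ∑ x ∈ s, c x * q x) :
    ∑ x ∈ s, c x * p x * (log (p x) - log (q x)) = 0 ↔ ∀ x ∈ s, c x ≠ 0 → p x = q x := by
  have hzero : ∑ x ∈ s, c x * (p x - q x) = 0 := by
    simp only [mul_sub, Finset.sum_sub_distrib, hsum, sub_self]
  calc _ ↔ ∑ x ∈ s, c x * (p x - q x) = ∑ x ∈ s, c x * p x * (log (p x) - log (q x)) := by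
        rw [hzero, eq_comm]
    _ ↔ _ := (Finset.sum_eq_sum_iff_of_le fun x hx =>
        mul_sub_le_mul_mul_log_sub_log (hc x hx) (hp x hx) (hq x hx) (hpq x hx)).trans <|
      forall₂_congr fun x hx =>
        mul_sub_eq_mul_mul_log_sub_log_iff (hc x hx) (hp x hx) (hq x hx) (hpq x hx)

end

end Real

namespace Matrix

variable [Fintype n] [DecidableEq n]

theorem sum_normSq_apply_row_of_mem_unitaryGroup {W : Matrix n n ℂ}
    (hW : W ∈ unitaryGroup n ℂ) (i : n) : ∑ j, Complex.normSq (W i j) = 1 := by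
  have h : (W * star W) i i = 1 := by rw [Unitary.mul_star_self_of_mem hW, one_apply_eq]
  simp only [mul_apply, star_apply, RCLike.star_def, Complex.mul_conj] at h
  exact_mod_cast h

theorem sum_normSq_apply_col_of_mem_unitaryGroup {W : Matrix n n ℂ}
    (hW : W ∈ unitaryGroup n ℂ) (j : n) : ∑ i, Complex.normSq (W i j) = 1 := by
  simpa [star_apply] using sum_normSq_apply_row_of_mem_unitaryGroup (Unitary.star_mem hW) j

theorem trace_diagonal_mul_mul_diagonal_mul_star (W : Matrix n n ℂ) (f g : n → ℝ) :
    (diagonal (fun i => (f i : ℂ)) * W * (diagonal (fun j => (g j : ℂ)) * star W)).trace =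
      ((∑ i, ∑ j, Complex.normSq (W i j) * f i * g j : ℝ) : ℂ) := by
  rw [trace]
  push_cast
  refine Finset.sum_congr rfl fun i _ => ?_
  rw [diag_apply, mul_apply]
  simp only [diagonal_mul, star_apply, RCLike.star_def]
  refine Finset.sum_congr rfl fun j _ => ?_
  rw [Complex.normSq_eq_conj_mul_self]
  ring

theorem trace_conj_diagonal_mul_conj_diagonal (U V : Matrix n n ℂ) (f g : n → ℝ) :
    (U * diagonal (fun i => (f i : ℂ)) * star U *
        (V * diagonal (fun j => (g j : ℂ)) * star V)).trace =
      ((∑ i, ∑ j, Complex.normSq ((star U * V) i j) * f i * g j : ℝ) : ℂ) := by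
  rw [← trace_diagonal_mul_mul_diagonal_mul_star, star_mul, star_star]
  simp only [Matrix.mul_assoc]
  rw [trace_mul_comm U]
  simp only [Matrix.mul_assoc]

theorem conj_diagonal_eq_conj_diagonal {R : Type*} [CommRing R] [StarRing R]
    {U V : Matrix n n R} (hU : U ∈ unitaryGroup n R) (hV : V ∈ unitaryGroup n R) {f g : n → R}
    (h : ∀ i j, (star U * V) i j ≠ 0 → f i = g j) :
    U * diagonal f * star U = V * diagonal g * star V := by
  set W := star U * V
  have hfW : diagonal f * W = W * diagonal g := by
    ext i j
    rw [diagonal_mul, mul_diagonal]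
    by_cases hij : W i j = 0
    · simp [hij]
    · rw [h i j hij, mul_comm]
  have hUW : U * W = V := by
    rw [← Matrix.mul_assoc, Unitary.mul_star_self_of_mem hU, Matrix.one_mul]
  have hWW : W * star W = 1 := Unitary.mul_star_self_of_mem (mul_mem (Unitary.star_mem hU) hV)
  clear_value W
  calc U * diagonal f * star U = U * (diagonal f * W * star W) * star U := by
        rw [Matrix.mul_assoc _ W, hWW, Matrix.mul_one]
    _ = U * W * diagonal g * star (U * W) := by
        rw [hfW, star_mul]
        simp only [Matrix.mul_assoc]
    _ = V * diagonal g * star V := by rw [hUW]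

section Hermitian

variable {A B : Matrix n n ℂ}

noncomputable def eigenOverlap (hA : A.IsHermitian) (hB : B.IsHermitian) (i j : n) : ℝ :=
  Complex.normSq ((star (hA.eigenvectorUnitary : Matrix n n ℂ) * hB.eigenvectorUnitary) i j)

variable (hA : A.IsHermitian) (hB : B.IsHermitian)

theorem star_eigenvectorUnitary_mul_eigenvectorUnitary_mem :
    star (hA.eigenvectorUnitary : Matrix n n ℂ) * hB.eigenvectorUnitary ∈ unitaryGroup n ℂ :=
  mul_mem (Unitary.star_mem hA.eigenvectorUnitary.2) hB.eigenvectorUnitary.2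

theorem eigenOverlap_nonneg (i j : n) : 0 ≤ eigenOverlap hA hB i j := Complex.normSq_nonneg _

theorem eigenOverlap_self (i j : n) : eigenOverlap hA hA i j = if i = j then 1 else 0 := by
  simp [eigenOverlap, one_apply, apply_ite]

theorem sum_eigenOverlap_mul_left (f : n → ℝ) :
    ∑ i, ∑ j, eigenOverlap hA hB i j * f i = ∑ i, f i := by
  simp only [← Finset.sum_mul, eigenOverlap,
    sum_normSq_apply_row_of_mem_unitaryGroup
      (star_eigenvectorUnitary_mul_eigenvectorUnitary_mem hA hB), one_mul]

theorem sum_eigenOverlap_mul_right (g : n → ℝ) :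
    ∑ i, ∑ j, eigenOverlap hA hB i j * g j = ∑ j, g j := by
  rw [Finset.sum_comm]
  simp only [← Finset.sum_mul, eigenOverlap,
    sum_normSq_apply_col_of_mem_unitaryGroup
      (star_eigenvectorUnitary_mul_eigenvectorUnitary_mem hA hB), one_mul]

theorem trace_mul_hermitianLog :
    (A * hermitianLog hB).trace =
      ((∑ i, ∑ j, eigenOverlap hA hB i j * hA.eigenvalues i * Real.log (hB.eigenvalues j) : ℝ) :
        ℂ) := by
  nth_rewrite 1 [hA.spectral_theorem]
  exact trace_conj_diagonal_mul_conj_diagonal _ _ _ _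

theorem re_trace_mul_hermitianLog_sub_trace_mul_hermitianLog :
    ((A * hermitianLog hA).trace - (A * hermitianLog hB).trace).re =
      ∑ x : n × n, eigenOverlap hA hB x.1 x.2 * hA.eigenvalues x.1 *
        (Real.log (hA.eigenvalues x.1) - Real.log (hB.eigenvalues x.2)) := by
  rw [Fintype.sum_prod_type, trace_mul_hermitianLog hA hA, trace_mul_hermitianLog hA hB,
    ← Complex.ofReal_sub, Complex.ofReal_re]
  simp only [eigenOverlap_self, mul_sub, Finset.sum_sub_distrib]
  congr 1
  simp only [mul_assoc, sum_eigenOverlap_mul_left, ite_mul, one_mul, zero_mul, Finset.sum_ite_eq,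
    Finset.mem_univ, if_true]

theorem eigenvalues_eq_zero_of_eigenOverlap_ne_zero (hsupp : ∀ v, B *ᵥ v = 0 → A *ᵥ v = 0)
    {i j : n} (hij : eigenOverlap hA hB i j ≠ 0) (hj : hB.eigenvalues j = 0) :
    hA.eigenvalues i = 0 := by
  set U : Matrix n n ℂ := ↑hA.eigenvectorUnitary
  have hAb : A *ᵥ ⇑(hB.eigenvectorBasis j) = 0 :=
    hsupp _ (by rw [hB.mulVec_eigenvectorBasis, hj, zero_smul])
  have hdiag : star U * A = diagonal (RCLike.ofReal ∘ hA.eigenvalues) * star U := by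
    rw [← hA.conjStarAlgAut_star_eigenvectorUnitary, Unitary.conjStarAlgAut_star_apply,
      Matrix.mul_assoc, Unitary.mul_star_self_of_mem hA.eigenvectorUnitary.2, Matrix.mul_one]
  have h : (hA.eigenvalues i : ℂ) * (star U * hB.eigenvectorUnitary) i j = 0 :=
    calc _ = ((diagonal (RCLike.ofReal ∘ hA.eigenvalues) * star U) *ᵥ
          ⇑(hB.eigenvectorBasis j)) i := by
          rw [← mulVec_mulVec, mulVec_diagonal]; rfl
      _ = 0 := by rw [← hdiag, ← mulVec_mulVec, hAb, mulVec_zero]; rfl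
  rcases mul_eq_zero.1 h with h | h
  · exact_mod_cast h
  · exact absurd (by simp [eigenOverlap, U, h]) hij

end Hermitian

end Matrix

/-- Klein's inequality: for density matrices `ρ`, `σ` with `supp ρ ⊆ supp σ`,
the quantum relative entropy `tr(ρ log ρ) − tr(ρ log σ)` is non-negative, and it
vanishes if and only if `ρ = σ`. -/
theorem klein_inequality [Fintype n] [DecidableEq n]
    (ρ σ : Matrix n n ℂ) (hρ : ρ.PosSemidef) (hσ : σ.PosSemidef)
    (hρ1 : ρ.trace = 1) (hσ1 : σ.trace = 1)
    (hsupp : ∀ v : n → ℂ, σ *ᵥ v = 0 → ρ *ᵥ v = 0) :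
    0 ≤ ((ρ * hermitianLog hρ.1).trace - (ρ * hermitianLog hσ.1).trace).re ∧
      (((ρ * hermitianLog hρ.1).trace - (ρ * hermitianLog hσ.1).trace).re = 0 ↔ ρ = σ) := by
  have hD := re_trace_mul_hermitianLog_sub_trace_mul_hermitianLog hρ.1 hσ.1
  have hsum : ∑ x : n × n, eigenOverlap hρ.1 hσ.1 x.1 x.2 * hρ.1.eigenvalues x.1 =
      ∑ x : n × n, eigenOverlap hρ.1 hσ.1 x.1 x.2 * hσ.1.eigenvalues x.2 := by
    simp only [Fintype.sum_prod_type, sum_eigenOverlap_mul_left, sum_eigenOverlap_mul_right]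
    exact_mod_cast (hρ.1.trace_eq_sum_eigenvalues ▸ hρ1).trans
      (hσ.1.trace_eq_sum_eigenvalues ▸ hσ1).symm
  have hP (x : n × n) (_ : x ∈ Finset.univ) : 0 ≤ eigenOverlap hρ.1 hσ.1 x.1 x.2 :=
    eigenOverlap_nonneg hρ.1 hσ.1 x.1 x.2
  have hp (x : n × n) (_ : x ∈ Finset.univ) := hρ.eigenvalues_nonneg x.1
  have hq (x : n × n) (_ : x ∈ Finset.univ) := hσ.eigenvalues_nonneg x.2
  have hker (x : n × n) (_ : x ∈ Finset.univ) (hx : eigenOverlap hρ.1 hσ.1 x.1 x.2 ≠ 0) :=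
    eigenvalues_eq_zero_of_eigenOverlap_ne_zero hρ.1 hσ.1 hsupp hx
  refine ⟨hD ▸ Real.sum_mul_mul_log_sub_log_nonneg hP hp hq hker hsum, fun h => ?_,
    fun h => by subst h; simp⟩
  rw [hD, Real.sum_mul_mul_log_sub_log_eq_zero_iff hP hp hq hker hsum] at h
  rw [hρ.1.spectral_theorem, hσ.1.spectral_theorem]
  refine conj_diagonal_eq_conj_diagonal hρ.1.eigenvectorUnitary.2 hσ.1.eigenvectorUnitary.2
    fun i j hij => congrArg _ (h (i, j) (Finset.mem_univ _) ?_)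
  simpa [eigenOverlap] using hij
end

section
/- (Helstrom bound) Let ρ₀ and ρ₁ be density matrices on a finite-dimensional Hilbert space, given with prior probabilities η₀ and η₁ = 1 − η₀. For any POVM {E₀, E₁} (E₀, E₁ ≥ 0, E₀ + E₁ = 1), the success probability η₀ tr(E₀ ρ₀) + η₁ tr(E₁ ρ₁) of guessing the state is at most (1/2)(1 + tr|η₀ρ₀ − η₁ρ₁|), and there exists a POVM achieving this bound (the projectors onto the positive and negative parts of η₀ρ₀ − η₁ρ₁). -/
open Matrix Finset
open scoped ComplexOrder

/-- `tr|A|` for a Hermitian matrix `A`: the sum of the absolute values of its eigenvalues. -/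
noncomputable def traceAbs {n : Type*} [Fintype n] [DecidableEq n]
    {A : Matrix n n ℂ} (hA : A.IsHermitian) : ℝ :=
  ∑ i, |hA.eigenvalues i|

/-!
Write `Δ = η₀ρ₀ − η₁ρ₁` and `E₁ = 1 − E₀`; since `tr ρ₁ = 1` the success probability is
`η₁ + re tr(E₀Δ)`. In an eigenbasis of `Δ` this is `η₁ + ∑ᵢ mᵢλᵢ`, where the diagonal entries `mᵢ`
of `E₀` in that basis lie in `[0, 1]` because `0 ≤ E₀ ≤ 1`. Hence it is at most `η₁ + ∑ᵢ λᵢ⁺`,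
with equality for the spectral projection of `Δ` onto its positive eigenvalues, and
`2 ∑ᵢ λᵢ⁺ = tr|Δ| + tr Δ = tr|Δ| + η₀ − η₁`.
-/

open Unitary

namespace Matrix

theorem PosSemidef.re_diag_mul_le_posPart {n 𝕜 : Type*} [DecidableEq n] [RCLike 𝕜]
    {M : Matrix n n 𝕜} (hM : M.PosSemidef) (hM' : (1 - M).PosSemidef) (i : n) (x : ℝ) :
    RCLike.re (M i i * x) ≤ x⁺ := by
  obtain ⟨hre_nonneg, -⟩ := RCLike.nonneg_iff.mp (hM.diag_nonneg (i := i))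
  have hre_le_one := (RCLike.nonneg_iff.mp (hM'.diag_nonneg (i := i))).1
  simp only [sub_apply, one_apply_eq, map_sub, RCLike.one_re, sub_nonneg] at hre_le_one
  rw [RCLike.re_mul_ofReal]
  calc RCLike.re (M i i) * x ≤ RCLike.re (M i i) * x⁺ := by gcongr; exact le_posPart x
    _ ≤ x⁺ := mul_le_of_le_one_left (posPart_nonneg x) hre_le_one

variable {n 𝕜 : Type*} [Fintype n] [DecidableEq n] [RCLike 𝕜]

theorem trace_mul_diagonal (M : Matrix n n 𝕜) (d : n → 𝕜) :
    (M * diagonal d).trace = ∑ i, M i i * d i := by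
  simp [trace, mul_diagonal]

theorem trace_conjStarAlgAut (u : unitaryGroup n 𝕜) (X : Matrix n n 𝕜) :
    (conjStarAlgAut 𝕜 _ u X).trace = X.trace := by
  rw [conjStarAlgAut_apply, trace_mul_cycle, coe_star_mul_self, one_mul]

theorem PosSemidef.conjStarAlgAut {E : Matrix n n 𝕜} (hE : E.PosSemidef)
    (u : unitaryGroup n 𝕜) : (conjStarAlgAut 𝕜 _ u E).PosSemidef := by
  simpa [star_eq_conjTranspose] using hE.mul_mul_conjTranspose_same (u : Matrix n n 𝕜)

namespace IsHermitian

variable {A : Matrix n n 𝕜} (hA : A.IsHermitian)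

theorem trace_mul_eq_sum_eigenvalues (E : Matrix n n 𝕜) :
    (E * A).trace =
      ∑ i, conjStarAlgAut 𝕜 _ (star hA.eigenvectorUnitary) E i i * hA.eigenvalues i := by
  rw [← trace_conjStarAlgAut (star hA.eigenvectorUnitary), map_mul,
    hA.conjStarAlgAut_star_eigenvectorUnitary, trace_mul_diagonal]
  rfl

theorem re_trace_mul_le_sum_posPart {E : Matrix n n 𝕜} (hE : E.PosSemidef)
    (hE' : (1 - E).PosSemidef) :
    RCLike.re (E * A).trace ≤ ∑ i, (hA.eigenvalues i)⁺ := by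
  rw [hA.trace_mul_eq_sum_eigenvalues, map_sum]
  refine sum_le_sum fun i _ ↦ PosSemidef.re_diag_mul_le_posPart ?_ ?_ i _
  · exact hE.conjStarAlgAut _
  · simpa only [map_sub, map_one] using hE'.conjStarAlgAut (star hA.eigenvectorUnitary)

theorem posSemidef_cfc {f : ℝ → ℝ} (hf : ∀ x, 0 ≤ f x) : (hA.cfc f).PosSemidef :=
  (posSemidef_diagonal_iff.mpr fun i ↦ by simpa using hf _).conjStarAlgAut _

theorem one_sub_cfc (f : ℝ → ℝ) : 1 - hA.cfc f = hA.cfc (1 - f) := by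
  rw [IsHermitian.cfc, IsHermitian.cfc, ← map_one (conjStarAlgAut 𝕜 _ hA.eigenvectorUnitary),
    ← map_sub, ← diagonal_one, diagonal_sub]
  congr 2
  ext i
  simp

theorem trace_cfc_mul (f : ℝ → ℝ) :
    (hA.cfc f * A).trace = ((∑ i, f (hA.eigenvalues i) * hA.eigenvalues i : ℝ) : 𝕜) := by
  rw [hA.trace_mul_eq_sum_eigenvalues, IsHermitian.cfc, ← conjStarAlgAut_mul_apply,
    star_mul_self, map_one]
  simp

theorem exists_re_trace_mul_eq_sum_posPart :
    ∃ E : Matrix n n 𝕜, E.PosSemidef ∧ (1 - E).PosSemidef ∧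
      RCLike.re (E * A).trace = ∑ i, (hA.eigenvalues i)⁺ := by
  let f : ℝ → ℝ := fun x ↦ if 0 < x then 1 else 0
  refine ⟨hA.cfc f, hA.posSemidef_cfc fun x ↦ ?_, ?_, ?_⟩
  · dsimp only [f]; split_ifs <;> norm_num
  · rw [hA.one_sub_cfc]
    exact hA.posSemidef_cfc fun x ↦ by dsimp only [f, Pi.sub_apply]; split_ifs <;> norm_num
  · rw [hA.trace_cfc_mul, RCLike.ofReal_re]
    refine sum_congr rfl fun i _ ↦ ?_
    dsimp only [f]
    split_ifs with h
    · rw [one_mul, posPart_eq_self.mpr h.le]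
    · rw [zero_mul, posPart_eq_zero.mpr (not_lt.mp h)]

end IsHermitian

end Matrix

theorem Matrix.IsHermitian.two_mul_sum_posPart_eigenvalues {n : Type*} [Fintype n]
    [DecidableEq n] {A : Matrix n n ℂ} (hA : A.IsHermitian) :
    2 * ∑ i, (hA.eigenvalues i)⁺ = traceAbs hA + A.trace.re := by
  rw [hA.trace_eq_sum_eigenvalues, Complex.re_sum, traceAbs, mul_sum, ← sum_add_distrib]
  refine sum_congr rfl fun i _ ↦ ?_
  have hadd := posPart_add_negPart (hA.eigenvalues i)
  have hsub := posPart_sub_negPart (hA.eigenvalues i)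
  simp only [Complex.coe_algebraMap, Complex.ofReal_re]
  linarith

theorem re_trace_mul_add_re_trace_one_sub_mul {n : Type*} [Fintype n] [DecidableEq n]
    (E ρ₀ ρ₁ : Matrix n n ℂ) (ht₁ : ρ₁.trace = 1) (η₀ η₁ : ℝ) :
    η₀ * (E * ρ₀).trace.re + η₁ * ((1 - E) * ρ₁).trace.re
      = η₁ + (E * ((η₀ : ℂ) • ρ₀ - (η₁ : ℂ) • ρ₁)).trace.re := by
  simp only [Matrix.sub_mul, Matrix.mul_sub, Matrix.one_mul, Matrix.mul_smul, trace_sub,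
    trace_smul, ht₁, Complex.sub_re, smul_eq_mul, Complex.re_ofReal_mul, Complex.one_re]
  ring

theorem helstrom_bound_general {n : Type*} [Fintype n] [DecidableEq n]
    (ρ₀ ρ₁ : Matrix n n ℂ)
    (ht₀ : ρ₀.trace = 1) (ht₁ : ρ₁.trace = 1)
    (η₀ η₁ : ℝ) (hη₁ : η₁ = 1 - η₀)
    (hherm : ((η₀ : ℂ) • ρ₀ - (η₁ : ℂ) • ρ₁).IsHermitian) :
    (∀ E₀ E₁ : Matrix n n ℂ, E₀.PosSemidef → E₁.PosSemidef → E₀ + E₁ = 1 →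
      η₀ * ((E₀ * ρ₀).trace).re + η₁ * ((E₁ * ρ₁).trace).re
        ≤ (1 / 2) * (1 + traceAbs hherm)) ∧
    (∃ E₀ E₁ : Matrix n n ℂ, E₀.PosSemidef ∧ E₁.PosSemidef ∧ E₀ + E₁ = 1 ∧
      η₀ * ((E₀ * ρ₀).trace).re + η₁ * ((E₁ * ρ₁).trace).re
        = (1 / 2) * (1 + traceAbs hherm)) := by
  have hopt : (1 / 2) * (1 + traceAbs hherm) = η₁ + ∑ i, (hherm.eigenvalues i)⁺ := by
    have htr : ((η₀ : ℂ) • ρ₀ - (η₁ : ℂ) • ρ₁).trace.re = η₀ - η₁ := by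
      simp [trace_sub, trace_smul, ht₀, ht₁]
    linarith [hherm.two_mul_sum_posPart_eigenvalues]
  refine ⟨fun E₀ E₁ hE₀ hE₁ hsum ↦ ?_, ?_⟩
  · obtain rfl : E₁ = 1 - E₀ := eq_sub_of_add_eq' hsum
    rw [re_trace_mul_add_re_trace_one_sub_mul _ _ _ ht₁, hopt]
    gcongr
    exact hherm.re_trace_mul_le_sum_posPart hE₀ hE₁
  · obtain ⟨E, hE, hE', htr⟩ := hherm.exists_re_trace_mul_eq_sum_posPart
    refine ⟨E, 1 - E, hE, hE', add_sub_cancel E 1, ?_⟩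
    rw [re_trace_mul_add_re_trace_one_sub_mul _ _ _ ht₁, hopt, ← htr]
    rfl

/-- The Helstrom bound: for density matrices `ρ₀, ρ₁` with priors `η₀, η₁ = 1 − η₀`,
every two-outcome POVM `{E₀, E₁}` has success probability at most
`(1/2)(1 + tr|η₀ρ₀ − η₁ρ₁|)`, and some POVM attains this bound. -/
theorem helstrom_bound {n : Type*} [Fintype n] [DecidableEq n]
    (ρ₀ ρ₁ : Matrix n n ℂ) (h₀ : ρ₀.PosSemidef) (h₁ : ρ₁.PosSemidef)
    (ht₀ : ρ₀.trace = 1) (ht₁ : ρ₁.trace = 1)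
    (η₀ η₁ : ℝ) (hη₀ : 0 ≤ η₀) (hη₀1 : η₀ ≤ 1) (hη₁ : η₁ = 1 - η₀)
    (hherm : ((η₀ : ℂ) • ρ₀ - (η₁ : ℂ) • ρ₁).IsHermitian) :
    (∀ E₀ E₁ : Matrix n n ℂ, E₀.PosSemidef → E₁.PosSemidef → E₀ + E₁ = 1 →
      η₀ * ((E₀ * ρ₀).trace).re + η₁ * ((E₁ * ρ₁).trace).re
        ≤ (1 / 2) * (1 + traceAbs hherm)) ∧
    (∃ E₀ E₁ : Matrix n n ℂ, E₀.PosSemidef ∧ E₁.PosSemidef ∧ E₀ + E₁ = 1 ∧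
      η₀ * ((E₀ * ρ₀).trace).re + η₁ * ((E₁ * ρ₁).trace).re
        = (1 / 2) * (1 + traceAbs hherm)) :=
  helstrom_bound_general ρ₀ ρ₁ ht₀ ht₁ η₀ η₁ hη₁ hherm
end

section
/- Maximize f(a₀₀, a₀₁, a₁₀, a₁₁) = (1/4)(2a₀₀² + 2a₀₀a₀₁ + 2a₀₀a₁₀ + a₀₁² + a₁₀²) subject to a₀₀² + a₀₁² + a₁₀² + a₁₁² = 1 with all a_ij real. The maximum value is 3/4, attained at a₀₀ = √(2/3), a₀₁ = a₁₀ = 1/√6, a₁₁ = 0. -/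
/-- The maximum of `(1/4)(2a₀₀² + 2a₀₀a₀₁ + 2a₀₀a₁₀ + a₀₁² + a₁₀²)` over real
`a₀₀, a₀₁, a₁₀, a₁₁` with `a₀₀² + a₀₁² + a₁₀² + a₁₁² = 1` is `3/4`, attained at
`a₀₀ = √(2/3)`, `a₀₁ = a₁₀ = 1/√6`, `a₁₁ = 0`. -/
theorem coin_toss_cheating_max :
    IsGreatest
      {y : ℝ | ∃ a₀₀ a₀₁ a₁₀ a₁₁ : ℝ,
        a₀₀ ^ 2 + a₀₁ ^ 2 + a₁₀ ^ 2 + a₁₁ ^ 2 = 1 ∧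
        y = (1 / 4) * (2 * a₀₀ ^ 2 + 2 * a₀₀ * a₀₁ + 2 * a₀₀ * a₁₀
              + a₀₁ ^ 2 + a₁₀ ^ 2)}
      (3 / 4) ∧
    (Real.sqrt (2 / 3)) ^ 2 + (1 / Real.sqrt 6) ^ 2 + (1 / Real.sqrt 6) ^ 2 + (0 : ℝ) ^ 2 = 1 ∧
    (1 / 4) * (2 * (Real.sqrt (2 / 3)) ^ 2 + 2 * Real.sqrt (2 / 3) * (1 / Real.sqrt 6)
        + 2 * Real.sqrt (2 / 3) * (1 / Real.sqrt 6)
        + (1 / Real.sqrt 6) ^ 2 + (1 / Real.sqrt 6) ^ 2) = 3 / 4 := by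
  have h1 : (Real.sqrt (2 / 3)) ^ 2 = 2 / 3 := Real.sq_sqrt (by norm_num)
  have h6 : (Real.sqrt 6) ^ 2 = 6 := Real.sq_sqrt (by norm_num)
  have h2 : (1 / Real.sqrt 6) ^ 2 = 1 / 6 := by
    rw [div_pow, h6]; norm_num
  have h3 : Real.sqrt (2 / 3) * (1 / Real.sqrt 6) = 1 / 3 := by
    rw [mul_one_div, ← Real.sqrt_div (by norm_num),
      show (2:ℝ)/3/6 = (1/3)^2 by norm_num, Real.sqrt_sq (by norm_num)]
  refine ⟨⟨⟨Real.sqrt (2/3), 1/Real.sqrt 6, 1/Real.sqrt 6, 0, ?_, ?_⟩, ?_⟩, ?_, ?_⟩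
  · rw [h1, h2]; norm_num
  · rw [h1, h2, mul_assoc, h3]; norm_num
  · rintro y ⟨a, b, c, d, hn, rfl⟩
    nlinarith [sq_nonneg (a - 2*b), sq_nonneg (a - 2*c), sq_nonneg d, sq_nonneg a]
  · rw [h1, h2]; norm_num
  · rw [h1, h2, mul_assoc, h3]; norm_num
end

section
/- For real numbers p with 0 < p < 1 and δ with 0 < δ ≤ 1 − p, the quantity (√(p(p+δ)) + √((1−p)(1−p−δ)))² is at most 1 − δ². -/
/-- Fidelity bound: for `0 < p < 1` and `0 < δ ≤ 1 − p`,
`(√(p(p+δ)) + √((1−p)(1−p−δ)))² ≤ 1 − δ²`. -/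
theorem fidelity_test_bound (p δ : ℝ) (hp0 : 0 < p) (hp1 : p < 1)
    (hδ0 : 0 < δ) (hδ : δ ≤ 1 - p) :
    (Real.sqrt (p * (p + δ)) + Real.sqrt ((1 - p) * (1 - p - δ))) ^ 2 ≤ 1 - δ ^ 2 := by
  have hA : 0 ≤ p * (p + δ) := by nlinarith
  have hB : 0 ≤ (1 - p) * (1 - p - δ) := by nlinarith
  set a := Real.sqrt (p * (p + δ)) with ha
  set b := Real.sqrt ((1 - p) * (1 - p - δ)) with hb
  have ha0 : 0 ≤ a := Real.sqrt_nonneg _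
  have hb0 : 0 ≤ b := Real.sqrt_nonneg _
  have ha2 : a ^ 2 = p * (p + δ) := Real.sq_sqrt hA
  have hb2 : b ^ 2 = (1 - p) * (1 - p - δ) := Real.sq_sqrt hB
  have hS : 0 ≤ p * (1 - p) + (p + δ) * (1 - p - δ) := by nlinarith
  have hsq : (2 * (a * b)) ^ 2 ≤ (p * (1 - p) + (p + δ) * (1 - p - δ)) ^ 2 := by
    have : (2 * (a * b)) ^ 2 = 4 * (p * (p + δ)) * ((1 - p) * (1 - p - δ)) := by
      have : (2 * (a * b)) ^ 2 = 4 * a ^ 2 * b ^ 2 := by ring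
      rw [this, ha2, hb2]
    rw [this]
    nlinarith [sq_nonneg (p * (1 - p) - (p + δ) * (1 - p - δ))]
  have hkey : 2 * (a * b) ≤ p * (1 - p) + (p + δ) * (1 - p - δ) := by
    nlinarith [mul_nonneg ha0 hb0]
  nlinarith [hkey, ha2, hb2]
end

section
/- Let ρ₀ and ρ₁ be the qutrit density matrices of the pure states |ψ_b⟩ = (1/√2)(|b⟩ + |?⟩) for b = 0, 1, where |0⟩, |1⟩, |?⟩ are orthonormal. With equal priors, the optimal probability of distinguishing ρ₀ from ρ₁, namely (1/2)(1 + (1/2)tr|ρ₀ − ρ₁|), equals (1/2)(1 + √3/2), which is strictly greater than 3/4. -/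
/-!
`ρ₀ - ρ₁` is the explicit matrix `½ [[1, 0, 1], [0, -1, -1], [1, -1, 0]]`, with trace `0`,
determinant `0` and `tr ((ρ₀ - ρ₁)²) = 3/2`. Its three real eigenvalues therefore sum to `0`,
one of them vanishes, and their squares sum to `3/2`: they are `0, ±√3/2`, so the trace norm
`∑ |λᵢ|` is `√3`.
-/

open Matrix Finset

/-- The qutrit state `|ψ_b⟩ = (1/√2)(|b⟩ + |?⟩)`, where `|0⟩, |1⟩, |?⟩` are the
standard basis vectors of `ℂ³` (with `|?⟩` the third basis vector). -/
noncomputable def otPsi (b : Fin 2) : Fin 3 → ℂ := fun i =>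
  if i = 2 then ((1 / Real.sqrt 2 : ℝ) : ℂ)
  else if (i : ℕ) = (b : ℕ) then ((1 / Real.sqrt 2 : ℝ) : ℂ) else 0

/-- The density matrix `ρ_b = |ψ_b⟩⟨ψ_b|`. -/
noncomputable def otRho (b : Fin 2) : Matrix (Fin 3) (Fin 3) ℂ :=
  Matrix.vecMulVec (otPsi b) (star (otPsi b))

theorem abs_add_abs_eq_sqrt_of_add_eq_zero {a b s : ℝ} (hab : a + b = 0)
    (hs : a ^ 2 + b ^ 2 = s) :
    |a| + |b| = √(2 * s) := by
  obtain rfl : b = -a := by linarith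
  rw [abs_neg, ← hs, show 2 * (a ^ 2 + (-a) ^ 2) = (2 * a) ^ 2 by ring, Real.sqrt_sq_eq_abs,
    abs_mul, abs_two]
  ring

theorem abs_add_abs_add_abs_eq_sqrt_of_add_eq_zero_of_mul_eq_zero {a b c s : ℝ}
    (hsum : a + b + c = 0) (hprod : a * b * c = 0) (hs : a ^ 2 + b ^ 2 + c ^ 2 = s) :
    |a| + |b| + |c| = √(2 * s) := by
  rcases mul_eq_zero.1 hprod with hab | rfl
  · rcases mul_eq_zero.1 hab with rfl | rfl
    · simpa [add_comm] using
        abs_add_abs_eq_sqrt_of_add_eq_zero (a := b) (b := c) (by linarith) (by linarith)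
    · simpa using abs_add_abs_eq_sqrt_of_add_eq_zero (a := a) (b := c) (by linarith) (by linarith)
  · simpa using abs_add_abs_eq_sqrt_of_add_eq_zero (a := a) (b := b) (by linarith) (by linarith)

namespace Matrix.IsHermitian

variable {𝕜 : Type*} [RCLike 𝕜]

theorem trace_mul_self_eq_sum_sq_eigenvalues {n : Type*} [Fintype n] [DecidableEq n]
    {A : Matrix n n 𝕜} (hA : A.IsHermitian) :
    (A * A).trace = ∑ i, (hA.eigenvalues i : 𝕜) ^ 2 := by
  conv_lhs => rw [hA.spectral_theorem, ← map_mul, Unitary.conjStarAlgAut_apply, trace_mul_cycle,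
    Unitary.coe_star_mul_self, one_mul, diagonal_mul_diagonal, trace_diagonal]
  simp [sq]

theorem sum_abs_eigenvalues_eq_sqrt_of_trace_eq_zero_of_det_eq_zero
    {A : Matrix (Fin 3) (Fin 3) 𝕜} (hA : A.IsHermitian) (htrace : A.trace = 0) (hdet : A.det = 0)
    {s : ℝ} (hs : (A * A).trace = s) :
    ∑ i, |hA.eigenvalues i| = √(2 * s) := by
  rw [hA.trace_eq_sum_eigenvalues, Fin.sum_univ_three] at htrace
  rw [hA.det_eq_prod_eigenvalues, Fin.prod_univ_three] at hdet
  rw [hA.trace_mul_self_eq_sum_sq_eigenvalues, Fin.sum_univ_three] at hs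
  rw [Fin.sum_univ_three]
  exact abs_add_abs_add_abs_eq_sqrt_of_add_eq_zero_of_mul_eq_zero
    (by exact_mod_cast htrace) (by exact_mod_cast hdet) (by exact_mod_cast hs)

end Matrix.IsHermitian

theorem otRho_zero_sub_otRho_one :
    otRho 0 - otRho 1 = !![1/2, 0, 1/2; 0, -(1/2), -(1/2); 1/2, -(1/2), 0] := by
  have hhalf : ((√2 : ℝ) : ℂ)⁻¹ * ((√2 : ℝ) : ℂ)⁻¹ = 1 / 2 := by
    rw [← mul_inv, ← Complex.ofReal_mul, Real.mul_self_sqrt zero_le_two]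
    norm_num
  ext i j
  fin_cases i <;> fin_cases j <;>
    simp [otRho, otPsi, vecMulVec_apply, Fin.ext_iff, hhalf]

theorem sum_abs_eigenvalues_otRho_zero_sub_otRho_one (h : (otRho 0 - otRho 1).IsHermitian) :
    ∑ i, |h.eigenvalues i| = √3 := by
  have htrace : (otRho 0 - otRho 1).trace = 0 := by
    rw [otRho_zero_sub_otRho_one, trace_fin_three_of]; norm_num
  have hdet : (otRho 0 - otRho 1).det = 0 := by
    rw [otRho_zero_sub_otRho_one, det_fin_three]; simp
  have hsq : ((otRho 0 - otRho 1) * (otRho 0 - otRho 1)).trace = ((3 / 2 : ℝ) : ℂ) := by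
    rw [otRho_zero_sub_otRho_one, mul_fin_three, trace_fin_three_of]; norm_num
  rw [h.sum_abs_eigenvalues_eq_sqrt_of_trace_eq_zero_of_det_eq_zero (s := 3 / 2) htrace hdet hsq,
    mul_div_cancel₀ _ two_ne_zero]

/-- The optimal probability of distinguishing the oblivious-transfer states
`ρ₀, ρ₁` with equal priors, `(1/2)(1 + (1/2)tr|ρ₀ − ρ₁|)`, equals
`(1/2)(1 + √3/2)`, which is strictly greater than `3/4`. -/
theorem ot_attack_probability
    (h : (otRho 0 - otRho 1).IsHermitian) :
    (1 / 2) * (1 + (1 / 2) * ∑ i, |h.eigenvalues i|)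
        = (1 / 2) * (1 + Real.sqrt 3 / 2) ∧
      (3 / 4 : ℝ) < (1 / 2) * (1 + (1 / 2) * ∑ i, |h.eigenvalues i|) := by
  have hsqrt3 : (1 : ℝ) < √3 := by rw [Real.lt_sqrt zero_le_one]; norm_num
  rw [sum_abs_eigenvalues_otRho_zero_sub_otRho_one h]
  constructor
  · ring
  · linarith
end
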